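/- arXiv:2501.12227 — 2 statements merged into one kernel-verified Lean document; each statement's English description precedes it below -/
import Mathlib

section
/- For the example target distribution q_{X₁X₂Y} (with X₁=(X₁₁,X₁₂) a pair of independent uniform bits, X₂=B uniform on {1,2} independent of X₁, and Y=X_{1B}), every pmf of the form p(x₁,x₂,u₁,u₂,x̃₁,x̃₂,y) = p(x₁)p(x₂) ∏_{j=1,2} p(u_j,x̃_j|x_j) · p(y|u₁,u₂,x̃₁,x̃₂) on finite alphabets whose (X₁,X₂,Y)-marginal equals q(x₁,x₂,y) satisfies H(X₁|U₁,X̃₁) = 0; equivalently, for every pair (u₁,x̃₁) with P(U₁=u₁, X̃₁=x̃₁) > 0, the conditional distribution of X₁ given (U₁,X̃₁)=(u₁,x̃₁) is supported on a single point. -/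
open scoped BigOperators

set_option maxRecDepth 100000
set_option maxHeartbeats 2000000

noncomputable section

/-- `p` is a probability mass function on the finite type `α`. -/
def IsPMF {α : Type*} [Fintype α] (p : α → ℝ) : Prop :=
  (∀ a, 0 ≤ p a) ∧ ∑ a, p a = 1

/-- `k` is a stochastic kernel from `α` to the finite type `β`. -/
def IsKernel {α β : Type*} [Fintype β] (k : α → β → ℝ) : Prop :=
  ∀ a, (∀ b, 0 ≤ k a b) ∧ ∑ b, k a b = 1

/-- Distribution (pushforward pmf) of the random variable `X` under the pmf `μ`. -/
def rvDist {Ω α : Type*} [Fintype Ω] [DecidableEq α] (μ : Ω → ℝ) (X : Ω → α) : α → ℝ :=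
  fun a => ∑ ω, if X ω = a then μ ω else 0

/-- Shannon entropy in bits of a pmf on a finite type. -/
def entBits {α : Type*} [Fintype α] (p : α → ℝ) : ℝ :=
  (∑ a, Real.negMulLog (p a)) / Real.log 2

/-- Entropy (in bits) of a random variable `X` under the pmf `μ`. -/
def Hb {Ω α : Type*} [Fintype Ω] [Fintype α] [DecidableEq α] (μ : Ω → ℝ) (X : Ω → α) : ℝ :=
  entBits (rvDist μ X)

/-- Conditional entropy (in bits) `H(X | Z)`. -/
def condHb {Ω α γ : Type*} [Fintype Ω] [Fintype α] [Fintype γ] [DecidableEq α] [DecidableEq γ]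
    (μ : Ω → ℝ) (X : Ω → α) (Z : Ω → γ) : ℝ :=
  Hb μ (fun ω => (X ω, Z ω)) - Hb μ Z

/-- Mutual information (in bits) `I(X; Y)`. -/
def Ib {Ω α β : Type*} [Fintype Ω] [Fintype α] [Fintype β] [DecidableEq α] [DecidableEq β]
    (μ : Ω → ℝ) (X : Ω → α) (Y : Ω → β) : ℝ :=
  Hb μ X + Hb μ Y - Hb μ (fun ω => (X ω, Y ω))

/-- Conditional mutual information (in bits) `I(X; Y | Z)`. -/
def condIb {Ω α β γ : Type*} [Fintype Ω] [Fintype α] [Fintype β] [Fintype γ]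
    [DecidableEq α] [DecidableEq β] [DecidableEq γ]
    (μ : Ω → ℝ) (X : Ω → α) (Y : Ω → β) (Z : Ω → γ) : ℝ :=
  Hb μ (fun ω => (X ω, Z ω)) + Hb μ (fun ω => (Y ω, Z ω))
    - Hb μ (fun ω => (X ω, Y ω, Z ω)) - Hb μ Z

/- The example target distribution: `X₁ = (X₁₁, X₁₂)` a pair of independent uniform bits,
`X₂ = B` uniform on `{1, 2}` (encoded as `Bool`, `false ↦ 1`, `true ↦ 2`) independent of
`X₁`, and `Y = X_{1B}` the `B`-th component of `X₁`. -/

/-- Selection of the `B`-th component of `x₁ = (x₁₁, x₁₂)`. -/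
def selB (b : Bool) (a : Bool × Bool) : Bool := if b then a.2 else a.1

/-- The example target pmf `q_{X₁X₂Y}` on `(Bool × Bool) × Bool × Bool`. -/
def qEx : (Bool × Bool) × Bool × Bool → ℝ :=
  fun z => if z.2.2 = selB z.2.1 z.1 then (8 : ℝ)⁻¹ else 0

/- Projections of a 7-tuple sample space `Ω = 𝒳₁ × 𝒳₂ × 𝒰₁ × 𝒰₂ × 𝒳̃₁ × 𝒳̃₂ × 𝒴`. -/
section Proj7
variable {A B C D E F G : Type*}
def pj1 (ω : A × B × C × D × E × F × G) : A := ω.1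
def pj2 (ω : A × B × C × D × E × F × G) : B := ω.2.1
def pj3 (ω : A × B × C × D × E × F × G) : C := ω.2.2.1
def pj4 (ω : A × B × C × D × E × F × G) : D := ω.2.2.2.1
def pj5 (ω : A × B × C × D × E × F × G) : E := ω.2.2.2.2.1
def pj6 (ω : A × B × C × D × E × F × G) : F := ω.2.2.2.2.2.1
def pj7 (ω : A × B × C × D × E × F × G) : G := ω.2.2.2.2.2.2
end Proj7

/-- If at most one element has positive mass, `negMulLog` of the sum is the sum of
`negMulLog`s. -/
lemma sum_negMulLog_unique {α : Type*} [Fintype α] (f : α → ℝ) (h0 : ∀ a, 0 ≤ f a)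
    (huniq : ∀ a b, 0 < f a → 0 < f b → a = b) :
    Real.negMulLog (∑ a, f a) = ∑ a, Real.negMulLog (f a) := by
  by_cases h : ∃ a, f a ≠ 0
  · obtain ⟨a, ha⟩ := h
    have hfa : 0 < f a := lt_of_le_of_ne (h0 a) (Ne.symm ha)
    have hz : ∀ b ∈ Finset.univ, b ≠ (a : α) → f b = 0 := by
      intro b _ hb
      by_contra hb'
      exact hb (huniq b a (lt_of_le_of_ne (h0 b) (Ne.symm hb')) hfa)
    rw [Finset.sum_eq_single a hz (by simp),
      Finset.sum_eq_single a (fun b hb h => by rw [hz b hb h, Real.negMulLog_zero]) (by simp)]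
  · push_neg at h
    simp [h, Real.negMulLog_zero]

/-- Marginalization of a pushforward distribution over the first coordinate. -/
lemma rvDist_marg {Ω α γ : Type*} [Fintype Ω] [Fintype α] [DecidableEq α] [DecidableEq γ]
    (μ : Ω → ℝ) (X : Ω → α) (Z : Ω → γ) (c : γ) :
    rvDist μ Z c = ∑ a, rvDist μ (fun ω => (X ω, Z ω)) (a, c) := by
  unfold rvDist
  rw [Finset.sum_comm]
  refine Finset.sum_congr rfl fun ω _ => ?_
  by_cases h : Z ω = c <;> simp [Prod.ext_iff, ite_and, h, Finset.sum_ite_eq]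

/-- A quadruple sum of nonnegative terms being zero forces each term to vanish. -/
lemma sum4_eq_zero {A B C D : Type*} [Fintype A] [Fintype B] [Fintype C] [Fintype D]
    {f : A → B → C → D → ℝ} (h0 : ∀ a b c d, 0 ≤ f a b c d)
    (h : ∑ a, ∑ b, ∑ c, ∑ d, f a b c d = 0) (a : A) (b : B) (c : C) (d : D) :
    f a b c d = 0 := by
  have n3 : ∀ a b c, 0 ≤ ∑ d, f a b c d := fun a b c => Finset.sum_nonneg fun d _ => h0 a b c d
  have n2 : ∀ a b, 0 ≤ ∑ c, ∑ d, f a b c d := fun a b => Finset.sum_nonneg fun c _ => n3 a b c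
  have n1 : ∀ a, 0 ≤ ∑ b, ∑ c, ∑ d, f a b c d :=
    fun a => Finset.sum_nonneg fun b _ => n2 a b
  have h1 := (Finset.sum_eq_zero_iff_of_nonneg (fun a _ => n1 a)).mp h a (Finset.mem_univ a)
  have h2 := (Finset.sum_eq_zero_iff_of_nonneg (fun b _ => n2 a b)).mp h1 b (Finset.mem_univ b)
  have h3 := (Finset.sum_eq_zero_iff_of_nonneg (fun c _ => n3 a b c)).mp h2 c (Finset.mem_univ c)
  exact (Finset.sum_eq_zero_iff_of_nonneg (fun d _ => h0 a b c d)).mp h3 d (Finset.mem_univ d)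


/-- For the example target distribution, every pmf with the non-cribbing factorization
`p(x₁)p(x₂) ∏_j p(u_j, x̃_j | x_j) p(y | u₁, u₂, x̃₁, x̃₂)` whose `(X₁,X₂,Y)`-marginal is
the target satisfies `H(X₁ | U₁, X̃₁) = 0`; equivalently, for every `(u₁, x̃₁)` of positive
probability the conditional distribution of `X₁` given `(U₁, X̃₁) = (u₁, x̃₁)` is supported
on a single point. -/

theorem example_X1_determined
    {U1 U2 Xt1 Xt2 : Type*} [Fintype U1] [Fintype U2] [Fintype Xt1] [Fintype Xt2]
    [DecidableEq U1] [DecidableEq U2] [DecidableEq Xt1] [DecidableEq Xt2]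
    (μ : (Bool × Bool) × Bool × U1 × U2 × Xt1 × Xt2 × Bool → ℝ)
    (pX1 : Bool × Bool → ℝ) (pX2 : Bool → ℝ)
    (k1 : Bool × Bool → U1 × Xt1 → ℝ) (k2 : Bool → U2 × Xt2 → ℝ)
    (kY : U1 × U2 × Xt1 × Xt2 → Bool → ℝ)
    (hpX1 : IsPMF pX1) (hpX2 : IsPMF pX2)
    (hk1 : IsKernel k1) (hk2 : IsKernel k2) (hkY : IsKernel kY)
    (hfac : ∀ x1 x2 u1 u2 xt1 xt2 y,
      μ (x1, x2, u1, u2, xt1, xt2, y) =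
        pX1 x1 * pX2 x2 * k1 x1 (u1, xt1) * k2 x2 (u2, xt2) * kY (u1, u2, xt1, xt2) y)
    (hmarg : ∀ z, rvDist μ (fun ω => (pj1 ω, pj2 ω, pj7 ω)) z = qEx z) :
    condHb μ pj1 (fun ω => (pj3 ω, pj5 ω)) = 0 ∧
    ∀ u1 xt1, 0 < rvDist μ (fun ω => (pj3 ω, pj5 ω)) (u1, xt1) →
      ∃ x1 : Bool × Bool, ∀ x1' : Bool × Bool,
        0 < rvDist μ (fun ω => (pj1 ω, pj3 ω, pj5 ω)) (x1', u1, xt1) → x1' = x1 := by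

  -- basic nonnegativity facts
  have hμ0 : ∀ ω, 0 ≤ μ ω := by
    rintro ⟨x1, x2, u1, u2, xt1, xt2, y⟩
    rw [hfac]
    exact mul_nonneg (mul_nonneg (mul_nonneg (mul_nonneg (hpX1.1 x1) (hpX2.1 x2))
      ((hk1 x1).1 _)) ((hk2 x2).1 _)) ((hkY _).1 _)
  have hY : ∀ w, kY w true + kY w false = 1 := by
    intro w
    have := (hkY w).2
    rwa [Fintype.sum_bool] at this
  have hk2' : ∀ x2, ∑ u2, ∑ xt2, k2 x2 (u2, xt2) = 1 := by
    intro x2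
    have := (hk2 x2).2
    rwa [Fintype.sum_prod_type] at this
  -- expansion of the (X1,X2,Y)-marginal
  have hexp3 : ∀ x1 x2 y, rvDist μ (fun ω => (pj1 ω, pj2 ω, pj7 ω)) (x1, x2, y) =
      ∑ u1 : U1, ∑ u2 : U2, ∑ xt1 : Xt1, ∑ xt2 : Xt2, μ (x1, x2, u1, u2, xt1, xt2, y) := by
    rintro ⟨a1, a2⟩ x2 y
    simp only [rvDist, pj1, pj2, pj7, Fintype.sum_prod_type, Prod.mk.injEq, ite_and]
    simp [ite_add_ite]
  -- expansion of the (X1,(U1,Xt1)) and (X1,U1,Xt1) joints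
  have halg : ∀ x1 u1 xt1,
      (∑ x2 : Bool, ∑ u2 : U2, ∑ xt2 : Xt2, ∑ y : Bool, μ (x1, x2, u1, u2, xt1, xt2, y)) =
        pX1 x1 * k1 x1 (u1, xt1) := by
    intro x1 u1 xt1
    have step1 : ∀ (x2 : Bool) u2 xt2, (∑ y : Bool, μ (x1, x2, u1, u2, xt1, xt2, y)) =
        pX1 x1 * k1 x1 (u1, xt1) * pX2 x2 * k2 x2 (u2, xt2) := by
      intro x2 u2 xt2
      rw [Fintype.sum_bool, hfac, hfac]
      have : pX1 x1 * pX2 x2 * k1 x1 (u1, xt1) * k2 x2 (u2, xt2) * kY (u1, u2, xt1, xt2) true +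
          pX1 x1 * pX2 x2 * k1 x1 (u1, xt1) * k2 x2 (u2, xt2) * kY (u1, u2, xt1, xt2) false =
          pX1 x1 * pX2 x2 * k1 x1 (u1, xt1) * k2 x2 (u2, xt2) *
            (kY (u1, u2, xt1, xt2) true + kY (u1, u2, xt1, xt2) false) := by ring
      rw [this, hY, mul_one]
      ring
    simp_rw [step1]
    have step2 : ∀ x2 : Bool, (∑ u2 : U2, ∑ xt2 : Xt2,
        pX1 x1 * k1 x1 (u1, xt1) * pX2 x2 * k2 x2 (u2, xt2)) =
        pX1 x1 * k1 x1 (u1, xt1) * pX2 x2 := by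
      intro x2
      simp_rw [← Finset.mul_sum]
      rw [hk2' x2, mul_one]
    simp_rw [step2]
    have : ∀ x2 : Bool, pX1 x1 * k1 x1 (u1, xt1) * pX2 x2 =
        pX1 x1 * k1 x1 (u1, xt1) * pX2 x2 := fun _ => rfl
    rw [← Finset.mul_sum, hpX2.2, mul_one]
  have hJoint : ∀ (x1 : Bool × Bool) (w : U1 × Xt1),
      rvDist μ (fun ω => (pj1 ω, pj3 ω, pj5 ω)) (x1, w.1, w.2) = pX1 x1 * k1 x1 w := by
    rintro ⟨a1, a2⟩ ⟨u1, xt1⟩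
    rw [← halg (a1, a2) u1 xt1]
    simp only [rvDist, pj1, pj3, pj5, Fintype.sum_prod_type, Prod.mk.injEq, ite_and]
    simp [ite_add_ite]
  have hJointP : ∀ (x1 : Bool × Bool) (w : U1 × Xt1),
      rvDist μ (fun ω => (pj1 ω, ((fun ω => (pj3 ω, pj5 ω)) ω))) (x1, w) =
        pX1 x1 * k1 x1 w := by
    rintro ⟨a1, a2⟩ ⟨u1, xt1⟩
    rw [← halg (a1, a2) u1 xt1]
    simp only [rvDist, pj1, pj3, pj5, Fintype.sum_prod_type, Prod.mk.injEq, ite_and]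
    simp [ite_add_ite]
  have hZ : ∀ w : U1 × Xt1, rvDist μ (fun ω => (pj3 ω, pj5 ω)) w =
      ∑ x1 : Bool × Bool, pX1 x1 * k1 x1 w := by
    intro w
    rw [rvDist_marg μ pj1 (fun ω => (pj3 ω, pj5 ω)) w]
    exact Finset.sum_congr rfl fun x1 _ => hJointP x1 w
  -- positivity of the marginals pX1 and pX2
  have hpX1pos : ∀ x1, 0 < pX1 x1 := by
    intro x1
    rcases lt_or_eq_of_le (hpX1.1 x1) with h | h
    · exact h
    · exfalso
      have hm := hmarg (x1, false, x1.1)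
      rw [hexp3 x1 false x1.1] at hm
      have hq : qEx (x1, false, x1.1) = (8 : ℝ)⁻¹ := by simp [qEx, selB]
      rw [hq] at hm
      have : ∀ u1 u2 xt1 xt2, μ (x1, false, u1, u2, xt1, xt2, x1.1) = 0 := by
        intro u1 u2 xt1 xt2
        rw [hfac, ← h]
        ring
      simp only [this, Finset.sum_const_zero] at hm
      norm_num at hm
  have hpX2pos : ∀ x2, 0 < pX2 x2 := by
    intro x2
    rcases lt_or_eq_of_le (hpX2.1 x2) with h | h
    · exact h
    · exfalso
      have hm := hmarg ((false, false), x2, selB x2 (false, false))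
      rw [hexp3 (false, false) x2 (selB x2 (false, false))] at hm
      have hq : qEx ((false, false), x2, selB x2 (false, false)) = (8 : ℝ)⁻¹ := by
        simp [qEx]
      rw [hq] at hm
      have : ∀ u1 u2 xt1 xt2,
          μ ((false, false), x2, u1, u2, xt1, xt2, selB x2 (false, false)) = 0 := by
        intro u1 u2 xt1 xt2
        rw [hfac, ← h]
        ring
      simp only [this, Finset.sum_const_zero] at hm
      norm_num at hm
  -- each term of the marginal sum vanishes at the impossible output
  have hzero : ∀ (x1 : Bool × Bool) (x2 : Bool) u1 u2 xt1 xt2,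
      μ (x1, x2, u1, u2, xt1, xt2, !(selB x2 x1)) = 0 := by
    intro x1 x2 u1 u2 xt1 xt2
    have hm := hmarg (x1, x2, !(selB x2 x1))
    rw [hexp3 x1 x2 (!(selB x2 x1))] at hm
    have hq : qEx (x1, x2, !(selB x2 x1)) = 0 := by simp [qEx]
    rw [hq] at hm
    exact sum4_eq_zero (fun u1 u2 xt1 xt2 => hμ0 (x1, x2, u1, u2, xt1, xt2, !(selB x2 x1)))
      hm u1 u2 xt1 xt2
  -- the kernel G and its properties
  set G : Bool → U1 → Xt1 → Bool → ℝ :=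
    fun x2 u1 xt1 y => ∑ w2 : U2 × Xt2, k2 x2 w2 * kY (u1, w2.1, xt1, w2.2) y with hGdef
  have hGsum : ∀ x2 u1 xt1, G x2 u1 xt1 true + G x2 u1 xt1 false = 1 := by
    intro x2 u1 xt1
    rw [hGdef, ← Finset.sum_add_distrib]
    have : ∀ w2 : U2 × Xt2, k2 x2 w2 * kY (u1, w2.1, xt1, w2.2) true +
        k2 x2 w2 * kY (u1, w2.1, xt1, w2.2) false = k2 x2 w2 := by
      intro w2
      rw [← mul_add, hY, mul_one]
    simp_rw [this]
    exact (hk2 x2).2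
  have hG0 : ∀ (x1 : Bool × Bool) (x2 : Bool) u1 xt1, 0 < k1 x1 (u1, xt1) →
      G x2 u1 xt1 (!(selB x2 x1)) = 0 := by
    intro x1 x2 u1 xt1 hk
    rw [hGdef]
    apply Finset.sum_eq_zero
    rintro ⟨u2, xt2⟩ _
    have hz := hzero x1 x2 u1 u2 xt1 xt2
    rw [hfac] at hz
    have hA : pX1 x1 * pX2 x2 * k1 x1 (u1, xt1) ≠ 0 :=
      ne_of_gt (mul_pos (mul_pos (hpX1pos x1) (hpX2pos x2)) hk)
    have : pX1 x1 * pX2 x2 * k1 x1 (u1, xt1) *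
        (k2 x2 (u2, xt2) * kY (u1, u2, xt1, xt2) (!(selB x2 x1))) = 0 := by
      rw [← mul_assoc]; exact hz
    exact (mul_eq_zero.mp this).resolve_left hA
  -- the key uniqueness property
  have hkey : ∀ u1 xt1 (x1 x1' : Bool × Bool), 0 < k1 x1 (u1, xt1) → 0 < k1 x1' (u1, xt1) →
      x1 = x1' := by
    intro u1 xt1 x1 x1' h h'
    have e1 : G false u1 xt1 (!x1.1) = 0 := hG0 x1 false u1 xt1 h
    have e1' : G false u1 xt1 (!x1'.1) = 0 := hG0 x1' false u1 xt1 h'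
    have e2 : G true u1 xt1 (!x1.2) = 0 := hG0 x1 true u1 xt1 h
    have e2' : G true u1 xt1 (!x1'.2) = 0 := hG0 x1' true u1 xt1 h'
    have s1 := hGsum false u1 xt1
    have s2 := hGsum true u1 xt1
    have hfst : x1.1 = x1'.1 := by
      by_contra hne
      have hx : x1'.1 = !x1.1 := Bool.eq_not_iff.mpr (Ne.symm hne)
      rw [hx, Bool.not_not] at e1'
      cases hb : x1.1
      · rw [hb] at e1 e1'
        rw [Bool.not_false] at e1
        linarith
      · rw [hb] at e1 e1'
        rw [Bool.not_true] at e1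
        linarith
    have hsnd : x1.2 = x1'.2 := by
      by_contra hne
      have hx : x1'.2 = !x1.2 := Bool.eq_not_iff.mpr (Ne.symm hne)
      rw [hx, Bool.not_not] at e2'
      cases hb : x1.2
      · rw [hb] at e2 e2'
        rw [Bool.not_false] at e2
        linarith
      · rw [hb] at e2 e2'
        rw [Bool.not_true] at e2
        linarith
    exact Prod.ext hfst hsnd
  have hposk : ∀ (x1 : Bool × Bool) (w : U1 × Xt1), 0 < pX1 x1 * k1 x1 w → 0 < k1 x1 w := by
    intro x1 w h
    by_contra hc
    rw [le_antisymm (le_of_not_gt hc) ((hk1 x1).1 w), mul_zero] at h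
    exact lt_irrefl 0 h
  constructor
  · -- conditional entropy is zero
    have hHeq : Hb μ (fun ω => (pj1 ω, ((fun ω => (pj3 ω, pj5 ω)) ω))) =
        Hb μ (fun ω => (pj3 ω, pj5 ω)) := by
      unfold Hb entBits
      congr 1
      rw [Fintype.sum_prod_type]
      rw [Finset.sum_comm]
      refine Finset.sum_congr rfl fun w _ => ?_
      rw [hZ w, sum_negMulLog_unique (fun x1 => pX1 x1 * k1 x1 w)
        (fun x1 => mul_nonneg (hpX1.1 x1) ((hk1 x1).1 w))
        (fun a b ha hb => hkey w.1 w.2 a b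
          (by simpa using hposk a w ha) (by simpa using hposk b w hb))]
      exact Finset.sum_congr rfl fun x1 _ => by rw [hJointP x1 w]
    unfold condHb
    rw [hHeq, sub_self]
  · -- the support is a single point
    intro u1 xt1 hpos
    rw [hZ (u1, xt1)] at hpos
    have hex : ∃ x1 : Bool × Bool, 0 < pX1 x1 * k1 x1 (u1, xt1) := by
      by_contra hc
      push_neg at hc
      have : (∑ x1 : Bool × Bool, pX1 x1 * k1 x1 (u1, xt1)) = 0 :=
        Finset.sum_eq_zero fun x1 _ => le_antisymm (hc x1)
          (mul_nonneg (hpX1.1 x1) ((hk1 x1).1 _))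
      rw [this] at hpos
      exact lt_irrefl 0 hpos
    obtain ⟨x1, hx1⟩ := hex
    refine ⟨x1, fun x1' hx1' => ?_⟩
    rw [hJoint x1' (u1, xt1)] at hx1'
    exact hkey u1 xt1 x1' x1 (hposk x1' (u1, xt1) hx1') (hposk x1 (u1, xt1) hx1)
end
end

section
/- Let 𝒮 be a finite set, q_S a pmf on 𝒮, and n a positive integer. Let p_{Sⁿ} be a pmf on 𝒮ⁿ with ‖p_{Sⁿ} − q_S^{(n)}‖₁ ≤ ε for some ε ∈ (0,1], where q_S^{(n)}(sⁿ) = ∏_{i=1}^n q_S(sᵢ). Then Σ_{i=1}^n I_p(Sᵢ; S_{∼i}) ≤ n·g(ε), where S_{∼i} denotes all coordinates except the i-th, the mutual information is computed under p_{Sⁿ}, and g(ε) = 2√ε·(H(q_S) + log|𝒮| + log(1/√ε)). -/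
open scoped BigOperators

noncomputable section

/-- Shannon entropy (natural logarithm) of a pmf on a finite type. -/
def ent {α : Type*} [Fintype α] (p : α → ℝ) : ℝ := ∑ a, Real.negMulLog (p a)

/-- Entropy of a random variable `X` under the pmf `μ`. -/
def H {Ω α : Type*} [Fintype Ω] [Fintype α] [DecidableEq α] (μ : Ω → ℝ) (X : Ω → α) : ℝ :=
  ent (rvDist μ X)

/-- Conditional entropy `H(X | Z)`. -/
def condH {Ω α γ : Type*} [Fintype Ω] [Fintype α] [Fintype γ] [DecidableEq α] [DecidableEq γ]
    (μ : Ω → ℝ) (X : Ω → α) (Z : Ω → γ) : ℝ :=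
  H μ (fun ω => (X ω, Z ω)) - H μ Z

/-- Mutual information `I(X; Y)`. -/
def mutI {Ω α β : Type*} [Fintype Ω] [Fintype α] [Fintype β] [DecidableEq α] [DecidableEq β]
    (μ : Ω → ℝ) (X : Ω → α) (Y : Ω → β) : ℝ :=
  H μ X + H μ Y - H μ (fun ω => (X ω, Y ω))

/-- Conditional mutual information `I(X; Y | Z)`. -/
def condI {Ω α β γ : Type*} [Fintype Ω] [Fintype α] [Fintype β] [Fintype γ]
    [DecidableEq α] [DecidableEq β] [DecidableEq γ]
    (μ : Ω → ℝ) (X : Ω → α) (Y : Ω → β) (Z : Ω → γ) : ℝ :=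
  H μ (fun ω => (X ω, Z ω)) + H μ (fun ω => (Y ω, Z ω))
    - H μ (fun ω => (X ω, Y ω, Z ω)) - H μ Z

/-!
Fix a coordinate `i` and put `X = Sᵢ`, `Y = S_{∼i}`. Under the i.i.d. law `X ∼ q` is independent
of `Y`, so under `p` the law of `X` is `ε`-close to `q` and the law of `(X, Y)` is `2ε`-close to
`q ⊗ p_Y`. Then `I(X; Y) = (H(X) - H(q)) + (H(q) - H(X | Y))`: the first bracket is bounded by the
Fannes-type modulus `φ(d) = d (1 + log |𝒮|) - d log d` at `ε`, and the second, averaging the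
Fannes bound over the conditional laws of `X` given `Y` and using that `φ` is concave, by `φ(2ε)`.
Together with `I(X; Y) ≤ H(q) + φ(ε)` and `I(X; Y) ≤ log |𝒮|` this gives `g(ε)`, according to
the size of `√ε`.
-/

open Real Finset

namespace Real

lemma negMulLog_add_le {a b : ℝ} (ha : 0 ≤ a) (hb : 0 ≤ b) :
    negMulLog (a + b) ≤ negMulLog a + negMulLog b := by
  have hlog {c : ℝ} (hc : 0 ≤ c) (hcd : c ≤ a + b) : c * log c ≤ c * log (a + b) := by
    rcases hc.eq_or_lt with rfl | hc
    · simp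
    · exact mul_le_mul_of_nonneg_left (log_le_log hc hcd) hc.le
  simp only [negMulLog, neg_mul]
  nlinarith [hlog ha (by linarith), hlog hb (by linarith)]

lemma sum_negMulLog_le {ι : Type*} [Fintype ι] (d : ι → ℝ) (hd : ∀ i, 0 ≤ d i) :
    ∑ i, negMulLog (d i) ≤ (∑ i, d i) * log (Fintype.card ι) + negMulLog (∑ i, d i) := by
  rcases isEmpty_or_nonempty ι with hι | hι
  · simp
  set N : ℝ := (Fintype.card ι : ℝ)
  have hN : 0 < N := by simp [N, Fintype.card_pos]
  have hJensen := concaveOn_negMulLog.le_map_sum (t := univ) (w := fun _ => N⁻¹) (p := d)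
    (fun _ _ => by positivity) (by simp [N]) (fun i _ => hd i)
  simp only [smul_eq_mul, ← mul_sum] at hJensen
  have hscale : N * negMulLog (N⁻¹ * ∑ i, d i) = (∑ i, d i) * log N + negMulLog (∑ i, d i) := by
    rw [negMulLog_mul, negMulLog, log_inv]
    field_simp
  have := mul_le_mul_of_nonneg_left hJensen hN.le
  rwa [hscale, ← mul_assoc, mul_inv_cancel₀ hN.ne', one_mul] at this

end Real

/-- The modulus of continuity of the entropy on an alphabet of size `N`, in terms of the
`ℓ¹` distance `d` (a Fannes-type bound). -/
def fannesBound (N : ℕ) (d : ℝ) : ℝ := d * (1 + log N) + negMulLog d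

lemma concaveOn_fannesBound (N : ℕ) : ConcaveOn ℝ (Set.Ici 0) (fannesBound N) :=
  ((LinearMap.mulRight ℝ (1 + log N)).concaveOn (convex_Ici 0)).add concaveOn_negMulLog

lemma monotoneOn_fannesBound (N : ℕ) : MonotoneOn (fannesBound N) (Set.Icc 0 N) := by
  rintro a ⟨ha, -⟩ b ⟨-, hbN⟩ hab
  rcases (ha.trans hab).eq_or_lt with hb | hb
  · rw [le_antisymm hab (hb ▸ ha)]
  have hlog : log b ≤ log N := log_le_log hb hbN
  have htangent : a - b ≤ a * log a - a * log b := by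
    rcases ha.eq_or_lt with rfl | ha
    · simpa using hb.le
    have := self_sub_one_le_mul_log (div_nonneg ha.le hb.le)
    rw [log_div ha.ne' hb.ne'] at this
    have := mul_le_mul_of_nonneg_left this hb.le
    field_simp at this
    linarith
  simp only [fannesBound, negMulLog, neg_mul]
  nlinarith

lemma negMulLog_sub_negMulLog_le {x y : ℝ} (hx0 : 0 ≤ x) (hx1 : x ≤ 1) (hy0 : 0 ≤ y)
    (hy1 : y ≤ 1) : negMulLog x - negMulLog y ≤ negMulLog |x - y| + |x - y| := by
  rcases le_total y x with hyx | hxy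
  · have := negMulLog_add_le hy0 (sub_nonneg.2 hyx)
    rw [add_sub_cancel] at this
    rw [abs_of_nonneg (sub_nonneg.2 hyx)]
    linarith [sub_nonneg.2 hyx]
  · have := monotoneOn_fannesBound 1 ⟨hx0, by simpa using hx1⟩ ⟨hy0, by simpa using hy1⟩ hxy
    simp only [fannesBound, Nat.cast_one, log_one, add_zero, mul_one] at this
    rw [abs_sub_comm, abs_of_nonneg (sub_nonneg.2 hxy)]
    linarith [negMulLog_nonneg (sub_nonneg.2 hxy) (by linarith)]

lemma IsPMF.le_one {α : Type*} [Fintype α] {p : α → ℝ} (hp : IsPMF p) (a : α) : p a ≤ 1 :=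
  hp.2 ▸ single_le_sum (fun b _ => hp.1 b) (mem_univ a)

lemma IsPMF.card_pos {α : Type*} [Fintype α] {p : α → ℝ} (hp : IsPMF p) :
    0 < Fintype.card α := by
  by_contra h
  have : IsEmpty α := Fintype.card_eq_zero_iff.1 (by omega)
  simpa using hp.2

section Entropy

variable {α : Type*} [Fintype α]

lemma ent_nonneg {a : α → ℝ} (h0 : ∀ x, 0 ≤ a x) (h1 : ∀ x, a x ≤ 1) : 0 ≤ ent a :=
  sum_nonneg fun x _ => negMulLog_nonneg (h0 x) (h1 x)

lemma ent_le_log_card {a : α → ℝ} (ha : IsPMF a) : ent a ≤ log (Fintype.card α) := by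
  simpa [ent, ha.2] using sum_negMulLog_le a ha.1

lemma ent_sub_ent_le_fannesBound {a b : α → ℝ} (ha0 : ∀ x, 0 ≤ a x) (ha1 : ∀ x, a x ≤ 1)
    (hb0 : ∀ x, 0 ≤ b x) (hb1 : ∀ x, b x ≤ 1) :
    ent a - ent b ≤ fannesBound (Fintype.card α) (∑ x, |a x - b x|) := by
  calc ent a - ent b ≤ ∑ x, (negMulLog |a x - b x| + |a x - b x|) := by
        rw [ent, ent, ← sum_sub_distrib]
        exact sum_le_sum fun x _ => negMulLog_sub_negMulLog_le (ha0 x) (ha1 x) (hb0 x) (hb1 x)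
    _ ≤ fannesBound (Fintype.card α) (∑ x, |a x - b x|) := by
        rw [sum_add_distrib, fannesBound]
        linarith [sum_negMulLog_le (fun x => |a x - b x|) fun x => abs_nonneg _]

end Entropy

section JointPMF

variable {α β : Type*} [Fintype α] {P : α × β → ℝ}

/-- The conditional pmf of the first coordinate given `y`; it is `0` when `y` has mass `0`
(division by zero), which is harmless as it always comes weighted by that mass. -/
def condDist (P : α × β → ℝ) (y : β) (x : α) : ℝ := P (x, y) / ∑ x', P (x', y)

lemma mul_condDist (hP : ∀ z, 0 ≤ P z) (x : α) (y : β) :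
    (∑ x', P (x', y)) * condDist P y x = P (x, y) := by
  by_cases hy : ∑ x', P (x', y) = 0
  · have := (sum_eq_zero_iff_of_nonneg fun x' _ => hP (x', y)).1 hy x (mem_univ x)
    simp [condDist, hy, this]
  · exact mul_div_cancel₀ _ hy

lemma condDist_nonneg (hP : ∀ z, 0 ≤ P z) (y : β) (x : α) : 0 ≤ condDist P y x :=
  div_nonneg (hP _) (sum_nonneg fun _ _ => hP _)

lemma condDist_le_one (hP : ∀ z, 0 ≤ P z) (y : β) (x : α) : condDist P y x ≤ 1 :=
  div_le_one_of_le₀ (single_le_sum (f := fun x' => P (x', y)) (fun _ _ => hP _) (mem_univ x))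
    (sum_nonneg fun _ _ => hP _)

lemma sum_condDist {y : β} (hy : ∑ x', P (x', y) ≠ 0) : ∑ x, condDist P y x = 1 := by
  simp only [condDist, ← sum_div, div_self hy]

lemma IsPMF.sum_sum_eq_one [Fintype β] (hP : IsPMF P) : ∑ y, ∑ x, P (x, y) = 1 := by
  rw [← hP.2, Fintype.sum_prod_type, sum_comm]

def condEnt [Fintype β] (P : α × β → ℝ) : ℝ := ∑ y, (∑ x, P (x, y)) * ent (condDist P y)

lemma ent_eq_ent_snd_add_condEnt [Fintype β] (hP : ∀ z, 0 ≤ P z) :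
    ent P = ent (fun y => ∑ x, P (x, y)) + condEnt P := by
  have hy (y : β) : ∑ x, negMulLog (P (x, y))
      = negMulLog (∑ x, P (x, y)) + (∑ x, P (x, y)) * ent (condDist P y) := by
    have hx (x : α) : negMulLog (P (x, y)) = condDist P y x * negMulLog (∑ x', P (x', y))
        + (∑ x', P (x', y)) * negMulLog (condDist P y x) := by
      rw [← negMulLog_mul, mul_condDist hP]
    rw [sum_congr rfl fun x _ => hx x, sum_add_distrib, ← sum_mul, ← mul_sum]
    by_cases h : ∑ x, P (x, y) = 0
    · simp [h]
    · rw [sum_condDist h, one_mul, ent]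
  rw [ent, Fintype.sum_prod_type, sum_comm, ent, condEnt, ← sum_add_distrib]
  exact sum_congr rfl fun y _ => hy y

lemma condEnt_nonneg [Fintype β] (hP : ∀ z, 0 ≤ P z) : 0 ≤ condEnt P :=
  sum_nonneg fun y _ => mul_nonneg (sum_nonneg fun _ _ => hP _)
    (ent_nonneg (condDist_nonneg hP y) (condDist_le_one hP y))

/-- Average the Fannes bound for the conditional pmfs over `y`, then use the concavity of
`fannesBound`. -/
lemma ent_sub_condEnt_le [Fintype β] (hP : IsPMF P) {q : α → ℝ} (hq : IsPMF q) :
    ent q - condEnt P ≤ fannesBound (Fintype.card α) (∑ z, |P z - q z.1 * ∑ x, P (x, z.2)|) := by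
  set w : β → ℝ := fun y => ∑ x, P (x, y)
  have hw0 (y : β) : 0 ≤ w y := sum_nonneg fun _ _ => hP.1 _
  have hw1 : ∑ y, w y = 1 := hP.sum_sum_eq_one
  have hdist (y : β) : w y * ∑ x, |q x - condDist P y x| = ∑ x, |P (x, y) - q x * w y| := by
    rw [mul_sum]
    refine sum_congr rfl fun x _ => ?_
    rw [← abs_of_nonneg (hw0 y), ← abs_mul, abs_of_nonneg (hw0 y), mul_sub, mul_condDist hP.1,
      abs_sub_comm, mul_comm]
  calc ent q - condEnt P
      = ∑ y, w y * (ent q - ent (condDist P y)) := by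
        simp_rw [condEnt, mul_sub, sum_sub_distrib, ← sum_mul, hw1, one_mul, w]
    _ ≤ ∑ y, w y * fannesBound (Fintype.card α) (∑ x, |q x - condDist P y x|) :=
        sum_le_sum fun y _ => mul_le_mul_of_nonneg_left (ent_sub_ent_le_fannesBound hq.1
          hq.le_one (condDist_nonneg hP.1 y) (condDist_le_one hP.1 y)) (hw0 y)
    _ ≤ fannesBound (Fintype.card α) (∑ y, w y * ∑ x, |q x - condDist P y x|) :=
        (concaveOn_fannesBound _).le_map_sum (fun y _ => hw0 y) hw1
          fun y _ => Set.mem_Ici.2 (sum_nonneg fun _ _ => abs_nonneg _)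
    _ = fannesBound (Fintype.card α) (∑ z, |P z - q z.1 * w z.2|) := by
        simp_rw [hdist, Fintype.sum_prod_type (f := fun z => |P z - q z.1 * w z.2|)]
        rw [sum_comm]

end JointPMF

lemma fannesBound_mul_sq (N : ℕ) {k t : ℝ} (hk : 0 < k) (ht : 0 < t) :
    fannesBound N (k * t ^ 2) = k * t ^ 2 * (1 + log N - log k + 2 * log (1 / t)) := by
  rw [fannesBound, negMulLog, log_mul hk.ne' (by positivity), log_pow, one_div, log_inv]
  push_cast
  ring

/-- The three regimes `√ε ≤ 1/3`, `1/3 < √ε ≤ 1/2` and `1/2 < √ε` are handled by the three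
bounds `hsmall`, `hmid` and `hlarge` respectively. -/
lemma le_two_mul_sqrt_of_fannesBound {N : ℕ} {h I ε : ℝ} (hh0 : 0 ≤ h) (hhN : h ≤ log N)
    (hε0 : 0 < ε) (hε1 : ε ≤ 1)
    (hsmall : 2 ≤ N → I ≤ fannesBound N ε + fannesBound N (2 * ε))
    (hmid : I ≤ h + fannesBound N ε) (hlarge : I ≤ log N) :
    I ≤ 2 * √ε * (h + log N + log (1 / √ε)) := by
  obtain ⟨t, ht0, ht1, rfl⟩ : ∃ t, 0 < t ∧ t ≤ 1 ∧ ε = t ^ 2 :=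
    ⟨√ε, sqrt_pos.2 hε0, sqrt_le_one.2 hε1, (sq_sqrt hε0.le).symm⟩
  rw [sqrt_sq ht0.le]
  have hu0 : 0 ≤ log (1 / t) := log_nonneg (one_le_one_div ht0 ht1)
  have hF1 : fannesBound N (t ^ 2) = t ^ 2 * (1 + log N + 2 * log (1 / t)) := by
    simpa using fannesBound_mul_sq N one_pos ht0
  rcases le_or_gt N 1 with hN | hN
  · have hc : log N = 0 := by
      rcases Nat.le_one_iff_eq_zero_or_eq_one.1 hN with rfl | rfl <;> simp
    nlinarith [mul_nonneg ht0.le hu0]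
  have hc2 : log 2 ≤ log N := log_le_log two_pos (by exact_mod_cast hN)
  have hl2a : 0.69 < log 2 := lt_trans (by norm_num) log_two_gt_d9
  have hl2b : log 2 < 0.7 := lt_trans log_two_lt_d9 (by norm_num)
  rcases le_or_gt t (1 / 3) with hA | hA
  · have hI := hsmall hN
    rw [hF1, fannesBound_mul_sq N two_pos ht0] at hI
    have hu : t ^ 2 * log (1 / t) ≤ t * log (1 / t) / 3 := by
      nlinarith [mul_nonneg ht0.le hu0]
    have hc : t ^ 2 * log N ≤ t * log N / 3 := by
      nlinarith [mul_nonneg ht0.le (log_natCast_nonneg N)]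
    have hl : t ^ 2 * (3 - 2 * log 2) ≤ t * log N := by
      nlinarith [mul_le_mul_of_nonneg_left hA ht0.le]
    nlinarith [mul_nonneg ht0.le hh0]
  rcases le_or_gt t (1 / 2) with hB | hB
  · rw [hF1] at hmid
    have hh : (1 - 2 * t) * h ≤ (1 - 2 * t) * log N :=
      mul_le_mul_of_nonneg_left hhN (by linarith)
    have hu : t ^ 2 * log (1 / t) ≤ t * log (1 / t) := by
      nlinarith [mul_nonneg ht0.le hu0]
    have hl : t ^ 2 ≤ (4 * t - 1 - t ^ 2) * log N := by
      nlinarith [mul_le_mul_of_nonneg_left hc2 (show 0 ≤ 4 * t - 1 - t ^ 2 by nlinarith)]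
    nlinarith
  · nlinarith [mul_nonneg ht0.le hu0, mul_nonneg ht0.le hh0, log_natCast_nonneg N]

lemma ent_fst_add_ent_snd_sub_ent_le {α β : Type*} [Fintype α] [Fintype β] {P : α × β → ℝ}
    (hP : IsPMF P) {q : α → ℝ} (hq : IsPMF q) {ε : ℝ} (hε0 : 0 < ε) (hε1 : ε ≤ 1)
    (hfst : ∑ x, |∑ y, P (x, y) - q x| ≤ ε)
    (hindep : ∑ z, |P z - q z.1 * ∑ x, P (x, z.2)| ≤ 2 * ε) :
    ent (fun x => ∑ y, P (x, y)) + ent (fun y => ∑ x, P (x, y)) - ent P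
      ≤ 2 * √ε * (ent q + log (Fintype.card α) + log (1 / √ε)) := by
  set N := Fintype.card α
  have hN1 : (1 : ℝ) ≤ N := by exact_mod_cast hq.card_pos
  have hPX : IsPMF fun x => ∑ y, P (x, y) :=
    ⟨fun x => sum_nonneg fun y _ => hP.1 _, by rw [← hP.2, Fintype.sum_prod_type]⟩
  have hfst' : ent (fun x => ∑ y, P (x, y)) - ent q ≤ fannesBound N ε :=
    (ent_sub_ent_le_fannesBound hPX.1 hPX.le_one hq.1 hq.le_one).trans
      (monotoneOn_fannesBound N ⟨sum_nonneg fun _ _ => abs_nonneg _, by linarith⟩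
        ⟨hε0.le, by linarith⟩ hfst)
  have hsnd (hN : 2 ≤ N) : ent q - condEnt P ≤ fannesBound N (2 * ε) := by
    have hN2 : (2 : ℝ) ≤ N := by exact_mod_cast hN
    exact (ent_sub_condEnt_le hP hq).trans (monotoneOn_fannesBound N
      ⟨sum_nonneg fun _ _ => abs_nonneg _, by linarith⟩ ⟨by linarith, by linarith⟩ hindep)
  rw [ent_eq_ent_snd_add_condEnt hP.1]
  have hcond := condEnt_nonneg hP.1
  refine le_two_mul_sqrt_of_fannesBound (ent_nonneg hq.1 hq.le_one) (ent_le_log_card hq) hε0 hε1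
    (fun hN => ?_) (by linarith) (by linarith [ent_le_log_card hPX])
  linarith [hsnd hN]

section Pushforward

variable {Ω α β : Type*} [Fintype Ω] [DecidableEq α] [DecidableEq β]

lemma rvDist_nonneg {μ : Ω → ℝ} (hμ : ∀ ω, 0 ≤ μ ω) (X : Ω → α) (a : α) : 0 ≤ rvDist μ X a :=
  sum_nonneg fun ω _ => by split_ifs <;> simp [hμ ω]

lemma sum_rvDist [Fintype α] (μ : Ω → ℝ) (X : Ω → α) : ∑ a, rvDist μ X a = ∑ ω, μ ω := by
  simp only [rvDist]
  rw [sum_comm]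
  simp

lemma IsPMF.rvDist [Fintype α] {μ : Ω → ℝ} (hμ : IsPMF μ) (X : Ω → α) : IsPMF (rvDist μ X) :=
  ⟨rvDist_nonneg hμ.1 X, (sum_rvDist μ X).trans hμ.2⟩

lemma sum_rvDist_pair_right [Fintype β] (μ : Ω → ℝ) (X : Ω → α) (Y : Ω → β) (x : α) :
    ∑ y, rvDist μ (fun ω => (X ω, Y ω)) (x, y) = rvDist μ X x := by
  simp only [rvDist, Prod.ext_iff]
  rw [sum_comm]
  refine sum_congr rfl fun ω _ => ?_
  split_ifs with h <;> simp [h]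

lemma sum_rvDist_pair_left [Fintype α] (μ : Ω → ℝ) (X : Ω → α) (Y : Ω → β) (y : β) :
    ∑ x, rvDist μ (fun ω => (X ω, Y ω)) (x, y) = rvDist μ Y y := by
  simp only [rvDist, Prod.ext_iff]
  rw [sum_comm]
  refine sum_congr rfl fun ω _ => ?_
  split_ifs with h <;> simp [h]

lemma sum_abs_rvDist_sub_le [Fintype α] (μ ν : Ω → ℝ) (X : Ω → α) :
    ∑ a, |rvDist μ X a - rvDist ν X a| ≤ ∑ ω, |μ ω - ν ω| := by
  calc ∑ a, |rvDist μ X a - rvDist ν X a|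
      ≤ ∑ a, ∑ ω, if X ω = a then |μ ω - ν ω| else 0 := by
        refine sum_le_sum fun a _ => ?_
        simp only [rvDist, ← sum_sub_distrib]
        refine (abs_sum_le_sum_abs _ _).trans_eq (sum_congr rfl fun ω _ => ?_)
        split_ifs <;> simp
    _ = ∑ ω, |μ ω - ν ω| := by
        rw [sum_comm]
        simp

lemma rvDist_equiv {Ω' : Type*} [DecidableEq Ω'] (μ : Ω → ℝ) (e : Ω ≃ Ω') (a : Ω') :
    rvDist μ e a = μ (e.symm a) := by
  rw [rvDist, sum_eq_single (e.symm a) (fun ω _ h => if_neg fun h' => h (e.eq_symm_apply.2 h'))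
    (by simp), if_pos (e.apply_symm_apply a)]

lemma mutI_eq_ent_marginals [Fintype α] [Fintype β] (μ : Ω → ℝ) (X : Ω → α) (Y : Ω → β) :
    mutI μ X Y = ent (fun x => ∑ y, rvDist μ (fun ω => (X ω, Y ω)) (x, y))
      + ent (fun y => ∑ x, rvDist μ (fun ω => (X ω, Y ω)) (x, y))
      - ent (rvDist μ (fun ω => (X ω, Y ω))) := by
  simp only [sum_rvDist_pair_right, sum_rvDist_pair_left]
  rfl

end Pushforward

lemma sum_abs_mul_sub_mul {α β : Type*} [Fintype α] [Fintype β] {q : α → ℝ} (hq : IsPMF q)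
    (f g : β → ℝ) : ∑ z : α × β, |q z.1 * f z.2 - q z.1 * g z.2| = ∑ y, |f y - g y| := by
  simp_rw [← mul_sub, abs_mul, Fintype.sum_prod_type, ← mul_sum, abs_of_nonneg (hq.1 _), ← sum_mul,
    hq.2, one_mul]

theorem mutI_le_of_close_to_indep {Ω α β : Type*} [Fintype Ω] [Fintype α] [Fintype β]
    [DecidableEq α] [DecidableEq β] {μ ν : Ω → ℝ} (hμ : IsPMF μ) (hν : ∑ ω, ν ω = 1)
    {X : Ω → α} {Y : Ω → β} {q : α → ℝ} (hq : IsPMF q)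
    (hindep : ∀ x y, rvDist ν (fun ω => (X ω, Y ω)) (x, y) = q x * rvDist ν Y y)
    {ε : ℝ} (hε0 : 0 < ε) (hε1 : ε ≤ 1) (hμν : ∑ ω, |μ ω - ν ω| ≤ ε) :
    mutI μ X Y ≤ 2 * √ε * (ent q + log (Fintype.card α) + log (1 / √ε)) := by
  have hνX (x : α) : rvDist ν X x = q x := by
    simp_rw [← sum_rvDist_pair_right ν X Y, hindep, ← mul_sum, sum_rvDist, hν, mul_one]
  have hνμ : ∑ ω, |ν ω - μ ω| ≤ ε := (sum_congr rfl fun ω _ => abs_sub_comm _ _).trans_le hμν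
  rw [mutI_eq_ent_marginals]
  refine ent_fst_add_ent_snd_sub_ent_le (hμ.rvDist _) hq hε0 hε1 ?_ ?_
  · simp_rw [sum_rvDist_pair_right, ← hνX]
    exact (sum_abs_rvDist_sub_le μ ν X).trans hμν
  · simp_rw [sum_rvDist_pair_left]
    calc ∑ z, |rvDist μ (fun ω => (X ω, Y ω)) z - q z.1 * rvDist μ Y z.2|
        ≤ ∑ z, (|rvDist μ (fun ω => (X ω, Y ω)) z - rvDist ν (fun ω => (X ω, Y ω)) z|
            + |q z.1 * rvDist ν Y z.2 - q z.1 * rvDist μ Y z.2|) :=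
          sum_le_sum fun z _ => hindep z.1 z.2 ▸ abs_sub_le _ _ _
      _ ≤ ε + ε := by
          rw [sum_add_distrib, sum_abs_mul_sub_mul hq]
          exact add_le_add ((sum_abs_rvDist_sub_le μ ν _).trans hμν)
            ((sum_abs_rvDist_sub_le ν μ Y).trans hνμ)
      _ = 2 * ε := by ring

section IID

variable {ι S : Type*} [Fintype ι] [DecidableEq ι] [Fintype S] [DecidableEq S]

lemma rvDist_prod_split (q : S → ℝ) (i : ι) (x : S) (y : {j // j ≠ i} → S) :
    rvDist (fun s : ι → S => ∏ j, q (s j)) (fun s => (s i, fun j : {j // j ≠ i} => s j)) (x, y)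
      = q x * ∏ j, q (y j) := by
  rw [show (fun s : ι → S => (s i, fun j : {j // j ≠ i} => s j)) = Equiv.funSplitAt i S from rfl,
    rvDist_equiv, Fintype.prod_eq_mul_prod_subtype_ne _ i]
  simp only [Equiv.funSplitAt_symm_apply, dite_true]
  exact congrArg _ (prod_congr rfl fun j _ => by simp [j.2])

theorem mutI_le_of_close_to_iid {q : S → ℝ} (hq : IsPMF q) {p : (ι → S) → ℝ} (hp : IsPMF p)
    {ε : ℝ} (hε0 : 0 < ε) (hε1 : ε ≤ 1) (hTV : ∑ s : ι → S, |p s - ∏ i, q (s i)| ≤ ε) (i : ι) :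
    mutI p (fun s => s i) (fun s => fun j : {j // j ≠ i} => s j.1)
      ≤ 2 * √ε * (ent q + log (Fintype.card S) + log (1 / √ε)) := by
  have hrest (y : {j // j ≠ i} → S) :
      rvDist (fun s : ι → S => ∏ j, q (s j)) (fun s j => s j.1) y = ∏ j, q (y j) := by
    rw [← sum_rvDist_pair_left _ (fun s : ι → S => s i)]
    simp_rw [rvDist_prod_split, ← sum_mul, hq.2, one_mul]
  refine mutI_le_of_close_to_indep hp ?_ hq (fun x y => ?_) hε0 hε1 hTV
  · rw [← Fintype.prod_sum (fun _ => q), hq.2, prod_const_one]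
  · rw [rvDist_prod_split, hrest]

end IID

theorem sum_mutual_information_le_of_close_to_iid_general
    {S : Type*} [Fintype S] [DecidableEq S]
    (q : S → ℝ) (hq : IsPMF q)
    (n : ℕ)
    (p : (Fin n → S) → ℝ) (hp : IsPMF p)
    (ε : ℝ) (hε0 : 0 < ε) (hε1 : ε ≤ 1)
    (hTV : ∑ s : Fin n → S, |p s - ∏ i, q (s i)| ≤ ε) :
    ∑ i : Fin n,
        mutI p (fun s => s i) (fun s => fun j : {j : Fin n // j ≠ i} => s j.1) ≤
      (n : ℝ) *
        (2 * Real.sqrt ε *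
          (ent q + Real.log (Fintype.card S) + Real.log (1 / Real.sqrt ε))) := by
  simpa using sum_le_sum fun i (_ : i ∈ univ) => mutI_le_of_close_to_iid hq hp hε0 hε1 hTV i

/-- **Lemma (Cuff et al. / Cervia et al., Lemma 6).** If a pmf `p` on `𝒮ⁿ` is within total
variation `ε` of the i.i.d. product `q_S^{(n)}`, then
`Σᵢ I_p(Sᵢ; S_{∼i}) ≤ n · g(ε)` where
`g(ε) = 2√ε (H(q_S) + log |𝒮| + log (1/√ε))`. -/
theorem sum_mutual_information_le_of_close_to_iid
    {S : Type*} [Fintype S] [DecidableEq S]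
    (q : S → ℝ) (hq : IsPMF q)
    (n : ℕ) (hn : 0 < n)
    (p : (Fin n → S) → ℝ) (hp : IsPMF p)
    (ε : ℝ) (hε0 : 0 < ε) (hε1 : ε ≤ 1)
    (hTV : ∑ s : Fin n → S, |p s - ∏ i, q (s i)| ≤ ε) :
    ∑ i : Fin n,
        mutI p (fun s => s i) (fun s => fun j : {j : Fin n // j ≠ i} => s j.1) ≤
      (n : ℝ) *
        (2 * Real.sqrt ε *
          (ent q + Real.log (Fintype.card S) + Real.log (1 / Real.sqrt ε))) :=
  sum_mutual_information_le_of_close_to_iid_general q hq n p hp ε hε0 hε1 hTV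
end
end
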